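/- Let u and v be unary semigroup words over an alphabet X. Then the identity u ≈ v holds in the adjacency semigroup A(H) of every graph H (i.e., for every graph H and every assignment θ : X → A(H), the values of u and v under θ coincide) if and only if G[u] = G[v], meaning: u and v have the same set of letters, the graphs G[u] and G[v] have the same edge set, the same initial vertex, and the same final vertex. -/
import Mathlib


/-- Multiplication of the adjacency semigroup `A(G)` of a graph `G = ⟨V; r⟩`:
the carrier is `Option (V × V)` with `none` playing the role of the zero element. -/
noncomputable def adjMul {V : Type*} (r : V → V → Prop) :
    Option (V × V) → Option (V × V) → Option (V × V)
  | some (x, y), some (z, t) =>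
      @ite _ (r y z) (Classical.propDecidable _) (some (x, t)) none
  | _, _ => none

/-- Reversion in the adjacency semigroup: `(x,y)' = (y,x)` and `0' = 0`. -/
def adjStar {V : Type*} : Option (V × V) → Option (V × V)
  | some (x, y) => some (y, x)
  | none => none

/-- Unary semigroup words over an alphabet `X`: letters, products, and reversals. -/
inductive UWord (X : Type*) where
  | letter : X → UWord X
  | mul : UWord X → UWord X → UWord X
  | star : UWord X → UWord X

namespace UWord

variable {X : Type*}

/-- Evaluation of a unary semigroup word in a unary semigroup under an
assignment of the letters. -/
def eval {S : Type*} [Mul S] [Star S] (θ : X → S) : UWord X → S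
  | .letter x => θ x
  | .mul u v => eval θ u * eval θ v
  | .star u => Star.star (eval θ u)

/-- Evaluation of a unary semigroup word in the adjacency semigroup of the
graph `⟨V; r⟩` under an assignment `θ` of the letters. -/
noncomputable def evalA {V : Type*} (r : V → V → Prop) (θ : X → Option (V × V)) :
    UWord X → Option (V × V)
  | .letter x => θ x
  | .mul u v => adjMul r (evalA r θ u) (evalA r θ v)
  | .star u => adjStar (evalA r θ u)

/-- The set of letters occurring in a word. -/
def letters : UWord X → Set X
  | .letter x => {x}
  | .mul u v => letters u ∪ letters v
  | .star u => letters u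

/-- Vertices of the graph `G[u]` of a word: `(x, false)` is the left vertex
`ℓ_x` and `(x, true)` is the right vertex `r_x` of the letter `x`. -/
abbrev Vtx (X : Type*) := X × Bool

/-- The pair (initial vertex, final vertex) of the graph `G[u]` of a word `u`. -/
def ends : UWord X → Vtx X × Vtx X
  | .letter x => ((x, false), (x, true))
  | .mul u v => ((ends u).1, (ends v).2)
  | .star u => ((ends u).2, (ends u).1)

/-- The edge set of the graph `G[u]` of a word `u`. -/
def edges : UWord X → Set (Vtx X × Vtx X)
  | .letter _ => ∅
  | .mul u v => edges u ∪ edges v ∪ {((ends u).2, (ends v).1)}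
  | .star u => edges u

end UWord

/-- Given an assignment `θ` of letters to (nonzero) pairs, the vertex `ℓ_x`
corresponds to the left coordinate `i_x` of `θ x`, and the vertex `r_x` to the
right coordinate `j_x`. -/
def coordOf {X V : Type*} (θ : X → V × V) : UWord.Vtx X → V
  | (x, false) => (θ x).1
  | (x, true) => (θ x).2

section Aux

open scoped Classical

variable {X : Type*} {V : Type*}

lemma adjMul_none_left (r : V → V → Prop) (b : Option (V × V)) :
    adjMul r none b = none := by
  cases b <;> rfl

lemma adjMul_none_right (r : V → V → Prop) (a : Option (V × V)) :
    adjMul r a none = none := by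
  rcases a with _ | ⟨x, y⟩ <;> rfl

lemma UWord.letters_nonempty (u : UWord X) : ∃ x, x ∈ u.letters := by
  induction u with
  | letter x => exact ⟨x, rfl⟩
  | mul u v ihu ihv =>
      obtain ⟨x, hx⟩ := ihu
      exact ⟨x, Or.inl hx⟩
  | star u ih => exact ih

lemma UWord.evalA_congr (r : V → V → Prop) (θ₁ θ₂ : X → Option (V × V))
    (u : UWord X) (h : ∀ x ∈ u.letters, θ₁ x = θ₂ x) :
    u.evalA r θ₁ = u.evalA r θ₂ := by
  induction u with
  | letter x => exact h x rfl
  | mul u v ihu ihv =>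
      rw [UWord.evalA, UWord.evalA,
        ihu fun x hx => h x (Or.inl hx), ihv fun x hx => h x (Or.inr hx)]
  | star u ih => rw [UWord.evalA, UWord.evalA, ih fun x hx => h x hx]

lemma UWord.evalA_none (r : V → V → Prop) (θ : X → Option (V × V))
    (u : UWord X) (x : X) (hx : x ∈ u.letters) (h : θ x = none) :
    u.evalA r θ = none := by
  induction u with
  | letter y => cases hx; exact h
  | mul u v ihu ihv =>
      rw [UWord.evalA]
      rcases hx with hx | hx
      · rw [ihu hx, adjMul_none_left]
      · rw [ihv hx, adjMul_none_right]
  | star u ih =>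
      rw [UWord.evalA, ih hx, adjStar]

lemma UWord.evalA_pure (r : V → V → Prop) (θ₀ : X → V × V) (u : UWord X) :
    u.evalA r (fun x => some (θ₀ x)) =
      if ∀ e ∈ u.edges, r (coordOf θ₀ e.1) (coordOf θ₀ e.2)
        then some (coordOf θ₀ u.ends.1, coordOf θ₀ u.ends.2)
        else none := by
  classical
  induction u with
  | letter x =>
      rw [if_pos (by simp [UWord.edges])]
      simp [UWord.evalA, UWord.ends, coordOf]
  | star u ih =>
      rw [UWord.evalA, ih]
      by_cases hC : ∀ e ∈ u.edges, r (coordOf θ₀ e.1) (coordOf θ₀ e.2)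
      · rw [if_pos hC, if_pos (by simpa [UWord.edges] using hC)]
        simp [adjStar, UWord.ends]
      · rw [if_neg hC, if_neg (by simpa [UWord.edges] using hC)]
        rfl
  | mul u v ihu ihv =>
      rw [UWord.evalA, ihu, ihv]
      by_cases hu : ∀ e ∈ u.edges, r (coordOf θ₀ e.1) (coordOf θ₀ e.2)
      · by_cases hv : ∀ e ∈ v.edges, r (coordOf θ₀ e.1) (coordOf θ₀ e.2)
        · rw [if_pos hu, if_pos hv]
          by_cases hj : r (coordOf θ₀ u.ends.2) (coordOf θ₀ v.ends.1)
          · rw [if_pos (by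
              intro e he
              rcases he with (he | he) | he
              · exact hu e he
              · exact hv e he
              · rcases Set.mem_singleton_iff.mp he with rfl
                exact hj)]
            show (if r (coordOf θ₀ u.ends.2) (coordOf θ₀ v.ends.1) then _ else _) = _
            rw [if_pos hj]
            rfl
          · rw [if_neg (fun h => hj
              (h (u.ends.2, v.ends.1) (Or.inr rfl)))]
            show (if r (coordOf θ₀ u.ends.2) (coordOf θ₀ v.ends.1) then _ else _) = _
            rw [if_neg hj]
        · rw [if_pos hu, if_neg hv, adjMul_none_right,
            if_neg (fun h => hv fun e he => h e (Or.inl (Or.inr he)))]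
      · rw [if_neg hu, adjMul_none_left,
          if_neg (fun h => hu fun e he => h e (Or.inl (Or.inl he)))]

lemma coordOf_canonical (X : Type*) :
    coordOf (fun x : X => ((x, false), (x, true))) = id := by
  funext p
  rcases p with ⟨x, _ | _⟩ <;> rfl

end Aux

/-- Proposition: an identity `u ≈ v` holds in the adjacency semigroup of every
graph if and only if `G[u] = G[v]`: same letters, same edge set, same initial
vertex and same final vertex. -/
theorem identity_holds_in_all_adjacency_iff_graph_eq {X : Type u} (u v : UWord X) :
    (∀ (V : Type u) (r : V → V → Prop) (θ : X → Option (V × V)),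
        u.evalA r θ = v.evalA r θ) ↔
      (u.letters = v.letters ∧ u.edges = v.edges ∧ u.ends = v.ends) := by
  classical
  constructor
  · intro h
    -- letters
    have hlet : u.letters = v.letters := by
      ext x
      have key : ∀ w : UWord X,
          (w.evalA (fun (_ _ : PUnit.{u+1}) => True)
            (fun y => if y = x then none else some (PUnit.unit, PUnit.unit)) = none)
          ↔ x ∈ w.letters := by
        intro w
        constructor
        · intro hw
          by_contra hx
          have : w.evalA (fun (_ _ : PUnit.{u+1}) => True)
              (fun y => if y = x then none else some (PUnit.unit, PUnit.unit))
              = w.evalA (fun (_ _ : PUnit.{u+1}) => True)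
                (fun _ => some (PUnit.unit, PUnit.unit)) := by
            apply UWord.evalA_congr
            intro y hy
            rw [if_neg (fun hyx : y = x => hx (hyx ▸ hy))]
          rw [this, UWord.evalA_pure, if_pos (fun _ _ => trivial)] at hw
          exact Option.some_ne_none _ hw
        · intro hx
          exact UWord.evalA_none _ _ w x hx (if_pos rfl)
      have := h PUnit.{u+1} (fun _ _ => True)
        (fun y => if y = x then none else some (PUnit.unit, PUnit.unit))
      constructor
      · intro hx
        exact (key v).mp (this ▸ (key u).mpr hx)
      · intro hx
        exact (key u).mp (this.symm ▸ (key v).mpr hx)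
    -- edges and ends
    have main : ∀ w₁ w₂ : UWord X,
        (∀ (r : UWord.Vtx X → UWord.Vtx X → Prop) (θ : X → Option (UWord.Vtx X × UWord.Vtx X)),
          w₁.evalA r θ = w₂.evalA r θ) →
        w₂.edges ⊆ w₁.edges ∧ w₂.ends = w₁.ends := by
      intro w₁ w₂ hw
      have h1 := hw (fun a b => (a, b) ∈ w₁.edges)
        (fun x => some ((x, false), (x, true)))
      rw [UWord.evalA_pure, UWord.evalA_pure, coordOf_canonical] at h1
      rw [if_pos (fun e he => by simpa using he)] at h1
      by_cases hc : ∀ e ∈ w₂.edges,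
          ((id e.1 : UWord.Vtx X), (id e.2 : UWord.Vtx X)) ∈ w₁.edges
      · rw [if_pos hc] at h1
        have h2 := Option.some_injective _ h1
        constructor
        · intro e he
          simpa using hc e he
        · have e1 : w₂.ends.1 = w₁.ends.1 := congrArg Prod.fst h2.symm
          have e2 : w₂.ends.2 = w₁.ends.2 := congrArg Prod.snd h2.symm
          exact Prod.ext e1 e2
      · rw [if_neg hc] at h1
        exact absurd h1 (Option.some_ne_none _)
    have h12 := main u v (fun r θ => h (UWord.Vtx X) r θ)
    have h21 := main v u (fun r θ => (h (UWord.Vtx X) r θ).symm)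
    exact ⟨hlet, Set.Subset.antisymm h21.1 h12.1, h21.2⟩
  · rintro ⟨hlet, hedg, hend⟩ V r θ
    by_cases hz : ∃ x ∈ u.letters, θ x = none
    · obtain ⟨x, hx, hθx⟩ := hz
      rw [UWord.evalA_none r θ u x hx hθx,
        UWord.evalA_none r θ v x (hlet ▸ hx) hθx]
    · push_neg at hz
      obtain ⟨x₀, hx₀⟩ := u.letters_nonempty
      obtain ⟨p₀, hp₀⟩ := Option.ne_none_iff_exists'.mp (hz x₀ hx₀)
      set θ₀ : X → V × V := fun x => (θ x).getD p₀ with hθ₀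
      have hagree : ∀ x ∈ u.letters, θ x = some (θ₀ x) := by
        intro x hx
        obtain ⟨p, hp⟩ := Option.ne_none_iff_exists'.mp (hz x hx)
        rw [hp, hθ₀]
        simp [hp]
      rw [UWord.evalA_congr r θ (fun x => some (θ₀ x)) u hagree,
        UWord.evalA_congr r θ (fun x => some (θ₀ x)) v
          (fun x hx => hagree x (hlet ▸ hx)),
        UWord.evalA_pure, UWord.evalA_pure, hedg, hend]
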